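/- arXiv:1902.07280 — 4 statements merged into one kernel-verified Lean document; each statement's English description precedes it below -/
import Mathlib

section
/- Let n, k, l be natural numbers with 1 ≤ k, 1 ≤ l, and l + k ≤ n. Then 2kl/(2n − k) < ln( (n choose k) / ((n − l) choose k) ), where the logarithm is the natural logarithm and the quantities are interpreted as real numbers. -/
private lemma aux_log_lb {y : ℝ} (hy : 1 < y) : 2*(y-1)/(y+1) < Real.log y := by
  have h0 : (0:ℝ) < y := by linarith
  set f : ℝ → ℝ := fun z => Real.log z + 4*(z+1)⁻¹ with hf
  have hmono : StrictMonoOn f (Set.Ici 1) := by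
    apply strictMonoOn_of_deriv_pos (convex_Ici 1)
    · apply ContinuousOn.add
      · exact Real.continuousOn_log.mono (by intro x hx; simp only [Set.mem_Ici] at hx; simp; linarith)
      · apply ContinuousOn.mul continuousOn_const
        apply ContinuousOn.inv₀ (by fun_prop)
        intro x hx
        simp only [Set.mem_Ici] at hx
        intro h; linarith
    · intro x hx
      rw [interior_Ici] at hx
      simp only [Set.mem_Ioi] at hx
      have hx0 : (0:ℝ) < x := by linarith
      have hx1 : x + 1 ≠ 0 := by linarith
      have h1 : HasDerivAt f (x⁻¹ + 4 * (-1 / (x+1)^2)) x := by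
        apply (Real.hasDerivAt_log (ne_of_gt hx0)).add
        have hid : HasDerivAt (fun z : ℝ => z + 1) 1 x := (hasDerivAt_id x).add_const 1
        have hinv := hid.inv hx1
        simpa using hinv.const_mul 4
      rw [h1.deriv]
      have heq : x⁻¹ + 4 * (-1 / (x+1)^2) = (x-1)^2 / (x*(x+1)^2) := by
        field_simp
        ring
      rw [heq]
      exact div_pos (pow_pos (by linarith) 2) (by positivity)
  have key := hmono (Set.self_mem_Ici) (Set.mem_Ici.mpr (le_of_lt hy)) hy
  have hf1 : f 1 = 2 := by simp [hf]; norm_num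
  have hfy : f y = Real.log y + 4*(y+1)⁻¹ := rfl
  rw [hf1, hfy] at key
  have hy1 : y + 1 ≠ 0 := by linarith
  have heq : 2*(y-1)/(y+1) = 2 - 4*(y+1)⁻¹ := by field_simp; ring
  linarith [heq ▸ (by linarith : 2 - 4*(y+1)⁻¹ < Real.log y)]

private lemma aux_log_diff {a x : ℝ} (ha : 0 < a) (hax : a < x) :
    2*a/(2*x - a) < Real.log x - Real.log (x - a) := by
  have hx0 : (0:ℝ) < x := lt_trans ha hax
  have hxa : (0:ℝ) < x - a := by linarith
  have hy : 1 < x / (x - a) := (one_lt_div hxa).mpr (by linarith)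
  have h := aux_log_lb hy
  rw [Real.log_div (ne_of_gt hx0) (ne_of_gt hxa)] at h
  have heq : 2*(x/(x-a) - 1)/(x/(x-a) + 1) = 2*a/(2*x - a) := by
    have h2 : (2*x - a) ≠ 0 := by linarith
    field_simp
    ring
  rw [heq] at h
  exact h

/-- `log C(m,k) - log C(m-1,k) = log m - log (m-k)` -/
private lemma aux_step (m k : ℕ) (hk : 1 ≤ k) (hkm : k + 1 ≤ m) :
    Real.log (m.choose k) - Real.log ((m-1).choose k)
      = Real.log m - Real.log ((m:ℝ) - k) := by
  have hm1 : 1 ≤ m := le_trans (by omega) hkm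
  have hid := Nat.choose_mul_succ_eq (m-1) k
  rw [Nat.sub_add_cancel hm1] at hid
  -- hid : (m-1).choose k * m = m.choose k * (m - k)
  have hkm' : k ≤ m - 1 := by omega
  have hc1 : (0:ℝ) < ((m-1).choose k : ℝ) := by
    exact_mod_cast Nat.choose_pos hkm'
  have hc2 : (0:ℝ) < (m.choose k : ℝ) := by
    exact_mod_cast Nat.choose_pos (by omega : k ≤ m)
  have hm0 : (0:ℝ) < (m:ℝ) := by exact_mod_cast hm1
  have hmk : (0:ℝ) < (m:ℝ) - k := by
    have : k < m := by omega
    have : (k:ℝ) < m := by exact_mod_cast this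
    linarith
  have hidR : ((m-1).choose k : ℝ) * m = (m.choose k : ℝ) * ((m:ℝ) - k) := by
    have := congrArg (fun t : ℕ => (t : ℝ)) hid
    push_cast [Nat.cast_sub (by omega : k ≤ m)] at this
    linarith [this]
  have hlog := congrArg Real.log hidR
  rw [Real.log_mul (ne_of_gt hc1) (ne_of_gt hm0),
      Real.log_mul (ne_of_gt hc2) (ne_of_gt hmk)] at hlog
  linarith

private lemma aux_main (n k : ℕ) (hk : 1 ≤ k) :
    ∀ l : ℕ, 1 ≤ l → l + k ≤ n →
      (2 * k * l : ℝ) / (2 * n - k)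
        < Real.log (n.choose k) - Real.log ((n - l).choose k) := by
  intro l hl
  induction l, hl using Nat.le_induction with
  | base =>
    intro hkl
    have hb := aux_step n k hk (by omega)
    have hkr : (0:ℝ) < (k:ℝ) := by exact_mod_cast hk
    have hkn : (k:ℝ) < (n:ℝ) := by exact_mod_cast (by omega : k < n)
    have := aux_log_diff hkr hkn
    rw [← hb] at this
    simpa using this
  | succ l hl1 ih =>
    intro hkl
    have hln : l + k ≤ n := by omega
    have IH := ih hln
    have hm : k + 1 ≤ n - l := by omega
    have hstep := aux_step (n - l) k hk hm
    have hsub : n - (l+1) = (n - l) - 1 := by omega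
    have hkr : (0:ℝ) < (k:ℝ) := by exact_mod_cast hk
    have hcast : ((n - l : ℕ) : ℝ) = (n:ℝ) - l := by
      push_cast [Nat.cast_sub (by omega : l ≤ n)]; ring
    have hkx : (k:ℝ) < ((n - l : ℕ) : ℝ) := by exact_mod_cast (by omega : k < n - l)
    have hdiff := aux_log_diff hkr hkx
    rw [← hstep] at hdiff
    -- hdiff : 2k/(2(n-l)-k) < log C(n-l,k) - log C(n-l-1,k)
    have hmono : (2*(k:ℝ))/(2*(n:ℝ) - k)
        ≤ 2*(k:ℝ)/(2*((n-l:ℕ):ℝ) - k) := by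
      have hd1 : (0:ℝ) < 2*((n-l:ℕ):ℝ) - k := by
        have : (k:ℝ) + 1 ≤ ((n-l:ℕ):ℝ) := by exact_mod_cast hm
        linarith
      have hd2 : 2*((n-l:ℕ):ℝ) - k ≤ 2*(n:ℝ) - k := by
        rw [hcast]
        have : (0:ℝ) ≤ (l:ℝ) := by positivity
        linarith
      gcongr
    have hfinal : (2*(k:ℝ))/(2*(n:ℝ) - k)
        < Real.log ((n-l).choose k) - Real.log ((n-(l+1)).choose k) := by
      rw [hsub]
      exact lt_of_le_of_lt hmono hdiff
    have hsum : (2 * (k:ℝ) * ((l:ℝ)+1)) / (2 * (n:ℝ) - k)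
        = (2 * k * l : ℝ) / (2 * n - k) + (2*(k:ℝ))/(2*(n:ℝ) - k) := by
      rw [← add_div]; ring_nf
    push_cast
    rw [hsum]
    linarith

/-- Lower bound on `ln(C(n,k)/C(n-l,k))` for the `k`-subset method:
`2kl/(2n - k) < ln (C(n,k) / C(n-l,k))`. -/
theorem log_choose_ratio_lower_bound
    (n k l : ℕ) (hk : 1 ≤ k) (hl : 1 ≤ l) (hkl : l + k ≤ n) :
    (2 * k * l : ℝ) / (2 * n - k)
      < Real.log ((n.choose k : ℝ) / ((n - l).choose k : ℝ)) := by
  have hc1 : (0:ℝ) < (n.choose k : ℝ) := by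
    exact_mod_cast Nat.choose_pos (by omega : k ≤ n)
  have hc2 : (0:ℝ) < ((n-l).choose k : ℝ) := by
    exact_mod_cast Nat.choose_pos (by omega : k ≤ n - l)
  rw [Real.log_div (ne_of_gt hc1) (ne_of_gt hc2)]
  exact aux_main n k hk l hl hkl
end

section
/- Let n, k, l be natural numbers with l ≤ n, and let S_1, ..., S_h be subsets of Fin n, each of cardinality at least k. Then there exists a set L ⊆ Fin n with |L| = l such that the number of indices j with S_j ∩ L = ∅ is at most h · ∏_{i=0}^{l−1} (n − k − i)/(n − i) (equivalently, the fraction of j with S_j ∩ L ≠ ∅ is at least 1 − ∏_{i=0}^{l−1} (n − k − i)/(n − i)), where each factor (n − k − i)/(n − i) is interpreted as a nonnegative rational, taken to be 0 when n − i ≤ k. -/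
open Finset

lemma exists_corruption_set_aux (n k h : ℕ) (S : Fin h → Finset (Fin n))
    (hS : ∀ j, k ≤ (S j).card) :
    ∀ (l : ℕ) (A : Finset (Fin n)) (J : Finset (Fin h)), l ≤ A.card →
      (∀ j ∈ J, S j ⊆ A) →
      ∃ L, L ⊆ A ∧ L.card = l ∧
        ((J.filter fun j => S j ∩ L = ∅).card : ℚ)
          ≤ (J.card : ℚ) * ∏ i ∈ Finset.range l,
              ((A.card - k - i : ℕ) : ℚ) / ((A.card - i : ℕ) : ℚ) := by
  intro l
  induction l with
  | zero =>
    intro A J _ _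
    refine ⟨∅, empty_subset _, card_empty, ?_⟩
    simp
  | succ l ih =>
    intro A J hlA hJA
    have hprodnonneg : ∀ (B : Finset ℕ) (m : ℕ),
        (0:ℚ) ≤ ∏ i ∈ B, ((m - k - i : ℕ) : ℚ) / ((m - i : ℕ) : ℚ) := by
      intro B m
      apply Finset.prod_nonneg
      intro i _
      positivity
    by_cases hk : k ≤ A.card
    · -- pigeonhole: there is a feature x ∈ A covering many hypotheses
      have hApos : 0 < A.card := lt_of_lt_of_le (Nat.succ_pos l) hlA
      have hAne : A.Nonempty := card_pos.mp hApos
      have key : ∑ x ∈ A, ((J.filter fun j => x ∈ S j).card : ℚ)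
          = ∑ j ∈ J, ((S j).card : ℚ) := by
        push_cast [Finset.card_filter]
        rw [Finset.sum_comm]
        apply Finset.sum_congr rfl
        intro j hj
        have : (A.filter fun x => x ∈ S j) = S j := by
          rw [Finset.filter_mem_eq_inter, Finset.inter_eq_right]
          exact hJA j hj
        calc ∑ x ∈ A, (if x ∈ S j then (1:ℚ) else 0)
            = ((A.filter fun x => x ∈ S j).card : ℚ) := by
              rw [Finset.card_filter]; push_cast; rfl
          _ = ((S j).card : ℚ) := by rw [this]
      have hsum : (J.card : ℚ) * k ≤ ∑ x ∈ A, ((J.filter fun j => x ∈ S j).card : ℚ) := by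
        rw [key]
        calc (J.card : ℚ) * k = ∑ _j ∈ J, (k : ℚ) := by
              rw [Finset.sum_const, nsmul_eq_mul]
          _ ≤ ∑ j ∈ J, ((S j).card : ℚ) := by
              apply Finset.sum_le_sum; intro j _; exact_mod_cast hS j
      obtain ⟨x, hxA, hx⟩ : ∃ x ∈ A,
          (J.card : ℚ) * k / A.card ≤ ((J.filter fun j => x ∈ S j).card : ℚ) := by
        by_contra hcon
        push_neg at hcon
        have hlt : ∑ x ∈ A, ((J.filter fun j => x ∈ S j).card : ℚ)
            < ∑ _x ∈ A, (J.card : ℚ) * k / A.card :=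
          Finset.sum_lt_sum_of_nonempty hAne hcon
        rw [Finset.sum_const, nsmul_eq_mul] at hlt
        have hA0 : (A.card : ℚ) ≠ 0 := by positivity
        have heq : (A.card : ℚ) * ((J.card : ℚ) * k / A.card) = (J.card : ℚ) * k := by
          field_simp
        rw [heq] at hlt
        linarith
      set c := (J.filter fun j => x ∈ S j).card with hc
      set J' := J.filter fun j => x ∉ S j with hJ'
      have hsplit : c + J'.card = J.card :=
        Finset.card_filter_add_card_filter_not (fun j => x ∈ S j)
      have hA0 : (A.card : ℚ) ≠ 0 := by positivity
      have hJ'card : (J'.card : ℚ) ≤ (J.card : ℚ) * ((A.card - k : ℕ) : ℚ) / A.card := by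
        have h1 : (J'.card : ℚ) = (J.card : ℚ) - c := by
          have := hsplit; push_cast [← this]; ring
        rw [h1, Nat.cast_sub hk]
        rw [div_le_iff₀ (by positivity)] at hx
        have : (J.card : ℚ) * ((A.card : ℚ) - k) / A.card
            = (J.card : ℚ) - (J.card : ℚ) * k / A.card := by
          field_simp
        rw [this]
        have : (J.card : ℚ) * k / A.card ≤ (c : ℚ) := by
          rw [div_le_iff₀ (by positivity)]; linarith [hx]
        linarith
      -- apply IH on A.erase x, J'
      have hcardA' : (A.erase x).card = A.card - 1 := card_erase_of_mem hxA
      have hl' : l ≤ (A.erase x).card := by omega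
      have hJ'A : ∀ j ∈ J', S j ⊆ A.erase x := by
        intro j hj
        rw [Finset.subset_erase]
        exact ⟨hJA j (Finset.mem_of_mem_filter j hj),
          (Finset.mem_filter.mp hj).2⟩
      obtain ⟨L', hL'A, hL'card, hL'bound⟩ := ih (A.erase x) J' hl' hJ'A
      have hxL' : x ∉ L' := fun hmem => (Finset.mem_erase.mp (hL'A hmem)).1 rfl
      refine ⟨insert x L', ?_, ?_, ?_⟩
      · exact Finset.insert_subset hxA (hL'A.trans (Finset.erase_subset x A))
      · rw [Finset.card_insert_of_notMem hxL', hL'card]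
      · -- count bound
        have hsub : (J.filter fun j => S j ∩ insert x L' = ∅)
            ⊆ (J'.filter fun j => S j ∩ L' = ∅) := by
          intro j hj
          obtain ⟨hjJ, hjdisj⟩ := Finset.mem_filter.mp hj
          have hxS : x ∉ S j := by
            intro hxS
            have : x ∈ S j ∩ insert x L' :=
              Finset.mem_inter.mpr ⟨hxS, Finset.mem_insert_self x L'⟩
            simp [hjdisj] at this
          have hdisj' : S j ∩ L' = ∅ := by
            rw [Finset.eq_empty_iff_forall_notMem] at hjdisj ⊢
            intro a ha
            obtain ⟨ha1, ha2⟩ := Finset.mem_inter.mp ha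
            exact hjdisj a (Finset.mem_inter.mpr ⟨ha1, Finset.mem_insert_of_mem ha2⟩)
          exact Finset.mem_filter.mpr ⟨Finset.mem_filter.mpr ⟨hjJ, hxS⟩, hdisj'⟩
        have hcount : ((J.filter fun j => S j ∩ insert x L' = ∅).card : ℚ)
            ≤ ((J'.filter fun j => S j ∩ L' = ∅).card : ℚ) := by
          exact_mod_cast Finset.card_le_card hsub
        have hP' : (0:ℚ) ≤ ∏ i ∈ Finset.range l,
            (((A.erase x).card - k - i : ℕ) : ℚ) / (((A.erase x).card - i : ℕ) : ℚ) := by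
          apply Finset.prod_nonneg; intro i _; positivity
        have hprod : ∏ i ∈ Finset.range (l+1),
              ((A.card - k - i : ℕ) : ℚ) / ((A.card - i : ℕ) : ℚ)
            = (∏ i ∈ Finset.range l,
                (((A.erase x).card - k - i : ℕ) : ℚ) / (((A.erase x).card - i : ℕ) : ℚ))
              * (((A.card - k : ℕ) : ℚ) / (A.card : ℚ)) := by
          rw [Finset.prod_range_succ']
          congr 1
          apply Finset.prod_congr rfl
          intro i _
          rw [hcardA']
          congr 2 <;> omega
        rw [hprod]
        calc ((J.filter fun j => S j ∩ insert x L' = ∅).card : ℚ)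
            ≤ ((J'.filter fun j => S j ∩ L' = ∅).card : ℚ) := hcount
          _ ≤ (J'.card : ℚ) * ∏ i ∈ Finset.range l,
                (((A.erase x).card - k - i : ℕ) : ℚ) / (((A.erase x).card - i : ℕ) : ℚ) :=
              hL'bound
          _ ≤ ((J.card : ℚ) * ((A.card - k : ℕ) : ℚ) / A.card) * ∏ i ∈ Finset.range l,
                (((A.erase x).card - k - i : ℕ) : ℚ) / (((A.erase x).card - i : ℕ) : ℚ) :=
              mul_le_mul_of_nonneg_right hJ'card hP'
          _ = (J.card : ℚ) * ((∏ i ∈ Finset.range l,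
                (((A.erase x).card - k - i : ℕ) : ℚ) / (((A.erase x).card - i : ℕ) : ℚ))
              * (((A.card - k : ℕ) : ℚ) / (A.card : ℚ))) := by ring
    · -- k > A.card : J must be empty
      push_neg at hk
      have hJempty : J = ∅ := by
        rw [Finset.eq_empty_iff_forall_notMem]
        intro j hj
        have h1 : (S j).card ≤ A.card := Finset.card_le_card (hJA j hj)
        have h2 := hS j
        omega
      obtain ⟨L, hLA, hLcard⟩ := Finset.exists_subset_card_eq hlA
      refine ⟨L, hLA, hLcard, ?_⟩
      subst hJempty
      simp

/-- Adversary optimality: against any `h` hypotheses each using at least `k` of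
the `n` features, there is a set `L` of `l` corrupted features such that at most
`h · ∏_{i=0}^{l-1} (n-k-i)/(n-i)` hypotheses are disjoint from `L` (each factor
computed with truncated natural subtraction, hence `0` when `n - i ≤ k`). -/
theorem exists_corruption_set
    (n k l h : ℕ) (hl : l ≤ n)
    (S : Fin h → Finset (Fin n)) (hS : ∀ j, k ≤ (S j).card) :
    ∃ L : Finset (Fin n), L.card = l ∧
      ((Finset.univ.filter fun j => S j ∩ L = ∅).card : ℚ)
        ≤ (h : ℚ) * ∏ i ∈ Finset.range l, ((n - k - i : ℕ) : ℚ) / ((n - i : ℕ) : ℚ) := by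
  obtain ⟨L, _, hLcard, hbound⟩ := exists_corruption_set_aux n k h S hS l Finset.univ
    Finset.univ (by simpa using hl) (fun j _ => Finset.subset_univ _)
  refine ⟨L, hLcard, ?_⟩
  simpa using hbound
end

section
/- Let n ≥ 1, let b ⊆ ZMod n with |b| = k, let L ⊆ ZMod n with |L| = l, and let G(b) = {b + i : i ∈ ZMod n} be the set of distinct cyclic shifts of b (where b + i = {x + i : x ∈ b}). Then n · |{c ∈ G(b) : c ∩ L ≠ ∅}| ≤ k · l · |G(b)|; that is, the fraction r of distinct shifts that intersect L satisfies r ≤ kl/n. -/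
/-!
The orbit map `g ↦ g +ᵥ b` of a finite group has as fibres the cosets of the stabiliser of `b`, so
every distinct shift is hit by the same number `s` of group elements. Hence `|G| = |orbit| · s`, and
the number of `g` with `(g +ᵥ b) ∩ L ≠ ∅` is `s` times the number of corrupt shifts. Those `g` lie
in `L - b`, so there are at most `|b| · |L|` of them.
-/

open Finset Pointwise

section ConstantFibres

variable {α β : Type*} [Fintype α] [DecidableEq β]

theorem card_filter_comp_eq_card_filter_image_mul {f : α → β} {s : ℕ}
    (hf : ∀ c ∈ univ.image f, #{i | f i = c} = s) (p : β → Prop) [DecidablePred p] :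
    #{i | p (f i)} = #{c ∈ univ.image f | p c} * s := by
  rw [card_eq_sum_card_image f, filter_image, ← smul_eq_mul, ← sum_const]
  refine sum_congr rfl fun c hc => ?_
  obtain ⟨i, hi, rfl⟩ := mem_image.mp hc
  rw [filter_filter, ← hf (f i) (mem_image_of_mem f (mem_univ i))]
  congr 1
  ext j
  simp only [mem_filter, mem_univ, true_and, and_iff_right_iff_imp]
  intro hji
  exact hji ▸ (mem_filter.mp hi).2

theorem card_univ_eq_card_image_mul {f : α → β} {s : ℕ}
    (hf : ∀ c ∈ univ.image f, #{i | f i = c} = s) :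
    Fintype.card α = #(univ.image f) * s := by
  simpa using card_filter_comp_eq_card_filter_image_mul hf (fun _ => True)

end ConstantFibres

section Orbit

variable {G X : Type*} [AddGroup G] [Fintype G] [AddAction G X] [DecidableEq X]

theorem card_filter_vadd_eq_card_stabilizer (x : X) (h : G) :
    #{g : G | g +ᵥ x = h +ᵥ x} = #{g : G | g +ᵥ x = x} :=
  card_nbij' (-h + ·) (h + ·)
    (fun g hg => by simp_all [add_vadd])
    (fun g hg => by simp_all [add_vadd])
    (fun g _ => by simp) (fun g _ => by simp)

theorem card_filter_vadd_inter_nonempty_le [DecidableEq G] (b L : Finset G) :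
    #{g : G | (g +ᵥ b) ∩ L ≠ ∅} ≤ #b * #L := by
  calc #{g : G | (g +ᵥ b) ∩ L ≠ ∅}
      _ ≤ #(L - b) := card_le_card fun g hg => by
        obtain ⟨_, hy⟩ := nonempty_iff_ne_empty.mpr (mem_filter.mp hg).2
        obtain ⟨hyb, hxL⟩ := mem_inter.mp hy
        obtain ⟨x, hx, rfl⟩ := mem_vadd_finset.mp hyb
        simpa using sub_mem_sub hxL hx
      _ ≤ #L * #b := card_sub_le
      _ = #b * #L := mul_comm _ _

theorem card_mul_card_filter_orbit_le [DecidableEq G] (b L : Finset G) :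
    Fintype.card G * #{c ∈ univ.image (fun g : G => g +ᵥ b) | c ∩ L ≠ ∅}
      ≤ #b * #L * #(univ.image (fun g : G => g +ᵥ b)) := by
  set s := #{g : G | g +ᵥ b = b}
  have hfibre : ∀ c ∈ univ.image (fun g : G => g +ᵥ b), #{g : G | g +ᵥ b = c} = s := by
    simp only [mem_image, mem_univ, true_and, forall_exists_index]
    rintro _ h rfl
    exact card_filter_vadd_eq_card_stabilizer b h
  have hcorrupt := card_filter_comp_eq_card_filter_image_mul hfibre (fun c => c ∩ L ≠ ∅)
  calc Fintype.card G * #{c ∈ univ.image (fun g : G => g +ᵥ b) | c ∩ L ≠ ∅}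
      _ = #(univ.image (fun g : G => g +ᵥ b)) * #{g : G | (g +ᵥ b) ∩ L ≠ ∅} := by
        rw [card_univ_eq_card_image_mul hfibre, hcorrupt]; ring
      _ ≤ #(univ.image (fun g : G => g +ᵥ b)) * (#b * #L) :=
        Nat.mul_le_mul_left _ (card_filter_vadd_inter_nonempty_le b L)
      _ = #b * #L * #(univ.image (fun g : G => g +ᵥ b)) := mul_comm _ _

end Orbit

/-- In the `k`-modulus method, the fraction of the distinct cyclic shifts
`G(b) = {b + i : i ∈ ZMod n}` of a size-`k` base subset `b` that intersect the
corrupted set `L` of size `l` is at most `k·l/n`. -/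
theorem frac_corrupt_distinct_shifts_le
    (n : ℕ) [NeZero n] (k l : ℕ) (b : Finset (ZMod n)) (hb : b.card = k)
    (L : Finset (ZMod n)) (hL : L.card = l) :
    n * ((Finset.univ.image fun i : ZMod n => b.image (· + i)).filter
          fun c => c ∩ L ≠ ∅).card
      ≤ k * l * (Finset.univ.image fun i : ZMod n => b.image (· + i)).card := by
  have hshift : (fun i : ZMod n => b.image (· + i)) = (· +ᵥ b) := by
    funext i
    rw [vadd_finset_def]
    simp only [vadd_eq_add, add_comm i]
  rw [hshift, ← hb, ← hL]
  simpa using card_mul_card_filter_orbit_le b L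
end

section
/- Let n ≥ 1 and 1 ≤ k ≤ n. Every subset b ⊆ ZMod n with |b| = k has orbit G(b) = {b + i : i ∈ ZMod n} (where b + i = {x + i : x ∈ b}) of size exactly n if and only if gcd(n, k) = 1. -/
/-!
The orbit of `b` under translation has `n` elements exactly when its stabilizer is trivial.
A stable set is a union of cosets of its stabilizer, so the stabilizer of a `k`-subset has order
dividing both `n` and `k`. Conversely, a prime `p ∣ gcd n k` gives by Cauchy a subgroup of
order `p`, and a union of `k / p` of its cosets is a `k`-subset with nontrivial stabilizer.
-/

open Finset Pointwise AddAction

theorem QuotientAddGroup.card_preimage_mk {G : Type*} [AddGroup G] (H : AddSubgroup G)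
    (t : Set (G ⧸ H)) : Nat.card (QuotientAddGroup.mk ⁻¹' t) = Nat.card H * Nat.card t := by
  rw [← Nat.card_prod, Nat.card_congr (QuotientAddGroup.preimageMkEquivAddSubgroupProdSet _ _)]

section

variable {G : Type*} [AddCommGroup G] [DecidableEq G]

theorem card_stabilizer_dvd_card (s : Finset G) : Nat.card (stabilizer G s) ∣ #s := by
  have hs : (s : Set G) + stabilizer G (s : Set G) = s := by
    rw [add_comm, stabilizer_add_self]
  have hcard := AddSubgroup.card_add_eq_card_addSubgroup_add_card_quotient
    (stabilizer G (s : Set G)) s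
  rw [hs, coe_sort_coe, Nat.card_eq_finsetCard] at hcard
  rw [← stabilizer_coe_finset, hcard]
  exact dvd_mul_right _ _

theorem exists_card_eq_and_le_stabilizer [Finite G] (H : AddSubgroup G) {k : ℕ}
    (hHk : Nat.card H ∣ k) (hk : k ≤ Nat.card G) :
    ∃ s : Finset G, #s = k ∧ H ≤ stabilizer G s := by
  have : Fintype (G ⧸ H) := Fintype.ofFinite _
  have hcosets : k / Nat.card H ≤ #(univ : Finset (G ⧸ H)) := by
    rw [card_univ, ← Nat.card_eq_fintype_card]
    rw [AddSubgroup.card_eq_card_quotient_mul_card_addSubgroup H, mul_comm] at hk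
    exact Nat.div_le_of_le_mul hk
  obtain ⟨t, -, ht⟩ := exists_subset_card_eq hcosets
  have hfin := Set.toFinite (QuotientAddGroup.mk ⁻¹' (t : Set (G ⧸ H)))
  refine ⟨hfin.toFinset, ?_, fun h hh => mem_stabilizer_finset.2 fun x => ?_⟩
  · rw [← Nat.card_eq_card_finite_toFinset, QuotientAddGroup.card_preimage_mk, coe_sort_coe,
      Nat.card_eq_finsetCard, ht, Nat.mul_div_cancel' hHk]
  · simp only [vadd_eq_add, Set.Finite.mem_toFinset, Set.mem_preimage, QuotientAddGroup.mk_add,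
      (QuotientAddGroup.eq_zero_iff h).2 hh, zero_add]

theorem card_image_add_right_eq_card_iff_stabilizer_eq_bot [Fintype G] (s : Finset G) :
    #(univ.image fun i => s.image (· + i)) = Nat.card G ↔ stabilizer G s = ⊥ := by
  have htranslate : (fun i => s.image (· + i)) = (· +ᵥ s) := by
    funext i
    rw [← image_vadd]
    simp_rw [vadd_eq_add, add_comm]
  rw [htranslate, Nat.card_eq_fintype_card, ← card_univ, card_image_iff, coe_univ,
    Set.injOn_univ]
  refine ⟨fun hinj => (AddSubgroup.eq_bot_iff_forall _).2 fun g hg => hinj (by simpa using hg),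
    fun hbot i j (hij : i +ᵥ s = j +ᵥ s) => ?_⟩
  have hji : -j + i ∈ stabilizer G s := by
    rw [mem_stabilizer_iff, ← vadd_vadd, hij, vadd_vadd, neg_add_cancel, zero_vadd]
  rwa [hbot, AddSubgroup.mem_bot, neg_add_eq_zero, eq_comm] at hji

theorem forall_card_eq_stabilizer_eq_bot_iff_coprime [Finite G] {k : ℕ} (hk : k ≤ Nat.card G) :
    (∀ s : Finset G, #s = k → stabilizer G s = ⊥) ↔ (Nat.card G).Coprime k := by
  refine ⟨fun h => Nat.coprime_of_dvd fun p hp hpG hpk => ?_, fun hcop s hs => ?_⟩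
  · have : Fact p.Prime := ⟨hp⟩
    obtain ⟨d, hd⟩ := exists_prime_addOrderOf_dvd_card' p hpG
    obtain ⟨s, hs, hle⟩ := exists_card_eq_and_le_stabilizer (AddSubgroup.zmultiples d)
      (by rwa [Nat.card_zmultiples, hd]) hk
    have hd0 : d = 0 := by
      simpa [h s hs] using hle (AddSubgroup.mem_zmultiples d)
    exact hp.one_lt.ne' (by rw [← hd, hd0, addOrderOf_zero])
  · rw [← AddSubgroup.card_eq_one, ← Nat.dvd_one, ← hcop.gcd_eq_one]
    exact Nat.dvd_gcd (AddSubgroup.card_addSubgroup_dvd_card _) (hs ▸ card_stabilizer_dvd_card s)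

end

theorem all_orbits_full_iff_coprime_general
    (n : ℕ) [NeZero n] (k : ℕ) (hkn : k ≤ n) :
    (∀ b : Finset (ZMod n), b.card = k →
        (Finset.univ.image fun i : ZMod n => b.image (· + i)).card = n)
      ↔ Nat.gcd n k = 1 := by
  have h := forall_card_eq_stabilizer_eq_bot_iff_coprime (G := ZMod n) (k := k)
    (by rwa [Nat.card_zmod])
  simp_rw [← card_image_add_right_eq_card_iff_stabilizer_eq_bot, Nat.card_zmod] at h
  exact h

/-- Corollary: every size-`k` subset of `ZMod n` has all `n` cyclic shifts
distinct iff `n` and `k` are relatively prime. -/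
theorem all_orbits_full_iff_coprime
    (n : ℕ) [NeZero n] (k : ℕ) (hk1 : 1 ≤ k) (hkn : k ≤ n) :
    (∀ b : Finset (ZMod n), b.card = k →
        (Finset.univ.image fun i : ZMod n => b.image (· + i)).card = n)
      ↔ Nat.gcd n k = 1 :=
  all_orbits_full_iff_coprime_general n k hkn
end
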